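/- The number of parking functions of size n whose parking permutation avoids 231, 312, and 321 equals ∑_{k=0}^n (−1)^k · (n!/k!) · (n−k+1). -/

import Mathlib

open Finset

noncomputable section

/-- The parking process over the first `k` cars (cars are `0,...,k-1`, i.e. cars `1,...,k`
in 1-indexed terms): returns `some occ` where `occ` maps each spot to the car parked there
(`none` meaning empty), or `none` if some car failed to park.  Car `c` drives to its
preferred spot `f c` and parks at the first free spot with index `≥ f c`, failing if
no such spot exists. -/
def parkAux {n : ℕ} (f : Fin n → Fin n) : ℕ → Option (Fin n → Option (Fin n))
  | 0 => some fun _ => none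
  | k + 1 =>
    (parkAux f k).bind fun occ =>
      if h : k < n then
        if hS : (Finset.univ.filter fun s => f ⟨k, h⟩ ≤ s ∧ occ s = none).Nonempty then
          some (Function.update occ
            ((Finset.univ.filter fun s => f ⟨k, h⟩ ≤ s ∧ occ s = none).min' hS)
            (some ⟨k, h⟩))
        else none
      else some occ

/-- All `n` cars park successfully. -/
def AllPark {n : ℕ} (f : Fin n → Fin n) : Prop := (parkAux f n).isSome

/-- `f` is a parking function: for every `i ∈ [n]`, at least `i` cars prefer
the first `i` spots.  (Here `i : Fin n` denotes the `(i+1)`-st spot, 0-indexed.) -/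
def IsParkingFunction {n : ℕ} (f : Fin n → Fin n) : Prop :=
  ∀ i : Fin n, i.val + 1 ≤ (Finset.univ.filter fun j => f j ≤ i).card

/-- `ρ` is the parking permutation of `f`: after all cars have parked,
spot `i` is occupied by car `ρ i`. -/
def IsParkingPerm {n : ℕ} (f : Fin n → Fin n) (ρ : Equiv.Perm (Fin n)) : Prop :=
  parkAux f n = some fun i => some (ρ i)

/-- `π` contains `σ` as a pattern. -/
def ContainsPattern {n m : ℕ} (π : Equiv.Perm (Fin n)) (σ : Equiv.Perm (Fin m)) : Prop :=
  ∃ g : Fin m → Fin n, StrictMono g ∧ ∀ a b : Fin m, σ a < σ b ↔ π (g a) < π (g b)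

/-- `ρ` avoids every pattern in the list `pats`. -/
def AvoidsAll {n : ℕ} (ρ : Equiv.Perm (Fin n)) (pats : List (Equiv.Perm (Fin 3))) : Prop :=
  ∀ σ ∈ pats, ¬ ContainsPattern ρ σ

/-- The number of parking functions of size `n` whose parking permutation avoids
all patterns in `pats`. -/
def pk (n : ℕ) (pats : List (Equiv.Perm (Fin 3))) : ℕ :=
  Nat.card {f : Fin n → Fin n // IsParkingFunction f ∧
    ∃ ρ : Equiv.Perm (Fin n), IsParkingPerm f ρ ∧ AvoidsAll ρ pats}

def p123 : Equiv.Perm (Fin 3) := Equiv.ofBijective ![0, 1, 2] (by decide)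
def p132 : Equiv.Perm (Fin 3) := Equiv.ofBijective ![0, 2, 1] (by decide)
def p213 : Equiv.Perm (Fin 3) := Equiv.ofBijective ![1, 0, 2] (by decide)
def p231 : Equiv.Perm (Fin 3) := Equiv.ofBijective ![1, 2, 0] (by decide)
def p312 : Equiv.Perm (Fin 3) := Equiv.ofBijective ![2, 0, 1] (by decide)
def p321 : Equiv.Perm (Fin 3) := Equiv.ofBijective ![2, 1, 0] (by decide)

/-!
The patterns 231, 312 and 321 are exactly the patterns of length three whose last entry lies below
the first, so a permutation avoids them iff it moves no point by more than one, i.e. iff it is a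
product of disjoint adjacent transpositions. Following the cars one at a time, a function has such a
parking permutation iff every car `i` prefers a spot `≤ i`, except that car `i` may prefer spot
`i + 1` when car `i + 1` prefers a spot `≤ i`; the two cars then trade places. Splitting on whether
car `n` of `n + 2` cars trades with the last one gives `a (n + 2) = (n + 2) a (n + 1) + (n + 1) a n`
for the number `a n` of such functions, which is the recursion of `d n + d (n + 1)` for the
derangement numbers `d`, and the alternating sum of the statement equals `d n + d (n + 1)`.
-/

section Parking

variable {n : ℕ} (f : Fin n → Fin n)

lemma parkAux_succ (c : Fin n) :
    parkAux f (c + 1) = (parkAux f c).bind fun occ =>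
      if hS : (univ.filter fun s => f c ≤ s ∧ occ s = none).Nonempty then
        some (Function.update occ ((univ.filter fun s => f c ≤ s ∧ occ s = none).min' hS)
          (some c))
      else none := by
  simp [parkAux, c.isLt]

lemma exists_parkAux_eq_some_of_succ {k : ℕ} {occ' : Fin n → Option (Fin n)}
    (h : parkAux f (k + 1) = some occ') : ∃ occ, parkAux f k = some occ := by
  rw [parkAux] at h
  cases hk : parkAux f k with
  | none => simp [hk] at h
  | some occ => exact ⟨occ, rfl⟩

lemma parkAux_succ_eq_some_iff {c : Fin n} {occ occ' : Fin n → Option (Fin n)}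
    (h : parkAux f c = some occ) :
    parkAux f (c + 1) = some occ' ↔
      ∃ s, IsLeast {t | f c ≤ t ∧ occ t = none} s ∧ occ' = Function.update occ s (some c) := by
  rw [parkAux_succ, h, Option.bind_some]
  split_ifs with hS
  · have hleast : IsLeast {t | f c ≤ t ∧ occ t = none} (min' _ hS) :=
      ⟨by simpa using min'_mem _ hS, fun t ht => min'_le _ _ (by simpa using ht)⟩
    constructor
    · intro h'
      exact ⟨_, hleast, (Option.some_inj.mp h').symm⟩
    · rintro ⟨s, hs, rfl⟩
      rw [hleast.unique hs]
  · simp only [false_iff]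
    rintro ⟨s, hs, -⟩
    exact hS ⟨s, by simpa using hs.1⟩

variable (ρ : Equiv.Perm (Fin n))

def occupancyBefore (k : ℕ) : Fin n → Option (Fin n) :=
  fun s => if (ρ s : ℕ) < k then some (ρ s) else none

lemma occupancyBefore_eq_none_iff (c s : Fin n) : occupancyBefore ρ c s = none ↔ c ≤ ρ s := by
  rw [occupancyBefore, Fin.le_def]
  split_ifs <;> simp only [false_iff, true_iff] <;> omega

lemma update_occupancyBefore (c : Fin n) :
    Function.update (occupancyBefore ρ c) (ρ.symm c) (some c) = occupancyBefore ρ (c + 1) := by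
  funext s
  by_cases hs : s = ρ.symm c
  · simp [hs, occupancyBefore]
  · have : ρ s ≠ c := fun h => hs (ρ.eq_symm_apply.mpr h)
    have : (ρ s : ℕ) ≠ c := Fin.val_injective.ne this
    rw [Function.update_of_ne hs]
    simp only [occupancyBefore]
    split_ifs <;> first | rfl | omega

lemma parkAux_succ_eq_occupancyBefore (c : Fin n) (h : parkAux f c = some (occupancyBefore ρ c))
    (hc : IsLeast {t | f c ≤ t ∧ c ≤ ρ t} (ρ.symm c)) :
    parkAux f (c + 1) = some (occupancyBefore ρ (c + 1)) :=
  (parkAux_succ_eq_some_iff f h).mpr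
    ⟨ρ.symm c, by simpa [occupancyBefore_eq_none_iff] using hc, (update_occupancyBefore ρ c).symm⟩

lemma parkAux_eq_occupancyBefore_of_succ (c : Fin n)
    (h : parkAux f (c + 1) = some (occupancyBefore ρ (c + 1))) :
    parkAux f c = some (occupancyBefore ρ c) ∧ IsLeast {t | f c ≤ t ∧ c ≤ ρ t} (ρ.symm c) := by
  obtain ⟨occ, hocc⟩ := exists_parkAux_eq_some_of_succ f h
  obtain ⟨s, hs, hupd⟩ := (parkAux_succ_eq_some_iff f hocc).mp h
  have hρs : ρ s = c := by
    have := congrFun hupd s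
    simp only [Function.update_self, occupancyBefore] at this
    split_ifs at this with h'
    exact Option.some_inj.mp this
  have hocc' : occ = occupancyBefore ρ c := by
    funext t
    by_cases ht : t = s
    · rw [ht, hs.1.2, eq_comm, occupancyBefore_eq_none_iff, hρs]
    · have hρt : (ρ t : ℕ) ≠ c := fun e => ht (ρ.injective (Fin.ext (e.trans (by rw [hρs]))))
      have := congrFun hupd t
      rw [Function.update_of_ne ht] at this
      rw [← this]
      simp only [occupancyBefore]
      split_ifs <;> first | rfl | omega
  subst hocc'
  refine ⟨hocc, ?_⟩
  rw [← ρ.eq_symm_apply.mpr hρs]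
  simpa [occupancyBefore_eq_none_iff] using hs

/-- Spot `t` is still free when car `c` arrives iff `c ≤ ρ t`. -/
theorem isParkingPerm_iff :
    IsParkingPerm f ρ ↔ ∀ c : Fin n, IsLeast {t | f c ≤ t ∧ c ≤ ρ t} (ρ.symm c) := by
  have hfinal : occupancyBefore ρ n = fun s => some (ρ s) := funext fun s => if_pos (ρ s).isLt
  rw [IsParkingPerm, ← hfinal]
  constructor
  · intro h
    have hall : ∀ k (hk : k ≤ n), parkAux f k = some (occupancyBefore ρ k) := fun k hk => by
      induction hk using Nat.decreasingInduction with
      | self => exact h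
      | of_succ k hk ih => exact (parkAux_eq_occupancyBefore_of_succ f ρ ⟨k, hk⟩ ih).1
    exact fun c => (parkAux_eq_occupancyBefore_of_succ f ρ c (hall _ c.isLt)).2
  · intro h
    have hall : ∀ k ≤ n, parkAux f k = some (occupancyBefore ρ k) := by
      intro k
      induction k with
      | zero => exact fun _ => congrArg some (funext fun s => by simp [occupancyBefore])
      | succ k ih =>
        exact fun hk =>
          parkAux_succ_eq_occupancyBefore f ρ ⟨k, hk⟩ (ih (Nat.le_of_succ_le hk)) (h _)
    exact hall n le_rfl

theorem IsParkingPerm.isParkingFunction {f : Fin n → Fin n} {ρ : Equiv.Perm (Fin n)}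
    (h : IsParkingPerm f ρ) : IsParkingFunction f := by
  intro i
  rw [← Fin.card_Iic]
  refine card_le_card_of_injOn ρ (fun s hs => ?_) ρ.injective.injOn
  simp only [coe_Iic, Set.mem_Iic, coe_filter, mem_univ, true_and, Set.mem_ofPred_eq] at hs ⊢
  have := ((isParkingPerm_iff f ρ).mp h (ρ s)).1.1
  rw [Equiv.symm_apply_apply] at this
  exact this.trans hs

end Parking

section Patterns

variable {n : ℕ}

lemma containsPattern_of_lt_iff {m : ℕ} {π : Equiv.Perm (Fin n)} {σ : Equiv.Perm (Fin m)}
    (g : Fin m → Fin n) (hg : StrictMono g)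
    (h : ∀ a b, a < b → (σ a < σ b ↔ π (g a) < π (g b))) : ContainsPattern π σ := by
  refine ⟨g, hg, fun a b => ?_⟩
  rcases lt_trichotomy a b with hab | rfl | hab
  · exact h a b hab
  · simp
  · rw [lt_iff_not_ge, lt_iff_not_ge (a := π (g a)), (σ.injective.ne hab.ne).le_iff_lt,
      (π.injective.ne (hg hab).ne).le_iff_lt, h b a hab]

lemma containsPattern_of_triple {π : Equiv.Perm (Fin n)} {σ : Equiv.Perm (Fin 3)} {a b c : Fin n}
    (hab : a < b) (hbc : b < c) (h₀₁ : σ 0 < σ 1 ↔ π a < π b) (h₀₂ : σ 0 < σ 2 ↔ π a < π c)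
    (h₁₂ : σ 1 < σ 2 ↔ π b < π c) : ContainsPattern π σ := by
  refine containsPattern_of_lt_iff ![a, b, c] ?_ fun x y hxy => ?_
  · exact Fin.strictMono_iff_lt_succ.mpr fun i => by fin_cases i <;> simpa
  · fin_cases x <;> fin_cases y <;> simp_all

lemma avoidsAll_iff_forall_lt (ρ : Equiv.Perm (Fin n)) :
    AvoidsAll ρ [p231, p312, p321] ↔ ∀ a b c, a < b → b < c → ρ a < ρ c := by
  constructor
  · intro h a b c hab hbc
    by_contra! hca
    have hca : ρ c < ρ a := hca.lt_of_ne (ρ.injective.ne (hab.trans hbc).ne')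
    have hba : ρ b ≠ ρ a := ρ.injective.ne hab.ne'
    have hbc' : ρ b ≠ ρ c := ρ.injective.ne hbc.ne
    have hcontains : ∀ σ ∈ [p231, p312, p321], (σ 0 < σ 1 ↔ ρ a < ρ b) →
        (σ 0 < σ 2 ↔ ρ a < ρ c) → (σ 1 < σ 2 ↔ ρ b < ρ c) → False :=
      fun σ hσ h₀₁ h₀₂ h₁₂ => h σ hσ (containsPattern_of_triple hab hbc h₀₁ h₀₂ h₁₂)
    rcases hba.lt_or_gt with hba | hba
    · rcases hbc'.lt_or_gt with hbc' | hbc'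
      · exact hcontains p312 (by simp) (by simp [p312]; order) (by simp [p312]; order)
          (by simp [p312]; order)
      · exact hcontains p321 (by simp) (by simp [p321]; order) (by simp [p321]; order)
          (by simp [p321]; order)
    · exact hcontains p231 (by simp) (by simp [p231]; order) (by simp [p231]; order)
          (by simp [p231]; order)
  · rintro h σ hσ ⟨g, hg, hpat⟩
    have hσ : σ 2 < σ 0 := by
      simp only [List.mem_cons, List.not_mem_nil, or_false] at hσ
      rcases hσ with rfl | rfl | rfl <;> decide
    exact (h (g 0) (g 1) (g 2) (hg (by decide)) (hg (by decide))).not_gt ((hpat 2 0).mp hσ)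

lemma forall_lt_symm {ρ : Equiv.Perm (Fin n)} (h : ∀ a b c, a < b → b < c → ρ a < ρ c) :
    ∀ a b c, a < b → b < c → ρ.symm a < ρ.symm c := by
  intro a b c hab hbc
  by_contra! hca
  have hca : ρ.symm c < ρ.symm a := hca.lt_of_ne (ρ.symm.injective.ne (hab.trans hbc).ne')
  rcases (ρ.symm.injective.ne hbc.ne).lt_or_gt with hb | hb
  · exact hab.not_gt (by simpa using h _ _ _ hb hca)
  · rcases (ρ.symm.injective.ne hab.ne').lt_or_gt with hb' | hb'
    · exact (hab.trans hbc).not_gt (by simpa using h _ _ _ hb hb')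
    · exact hbc.not_gt (by simpa using h _ _ _ hca hb')

lemma apply_le_succ_of_forall_lt {ρ : Equiv.Perm (Fin n)}
    (h : ∀ a b c, a < b → b < c → ρ a < ρ c) (s : Fin n) : (ρ s : ℕ) ≤ s + 1 := by
  by_contra! hs
  have hle := card_le_card_of_injOn (fun t => (ρ.symm t : ℕ)) (s := Iio (ρ s))
    (t := (range (s + 2)).erase s) (fun t ht => ?_) (fun t _ t' _ htt' => ?_)
  · rw [Fin.card_Iio, card_erase_of_mem (by simp), card_range] at hle
    omega
  · simp only [coe_Iio, Set.mem_Iio] at ht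
    simp only [coe_erase, coe_range, Set.mem_sdiff, Set.mem_Iio, Set.mem_singleton_iff]
    refine ⟨?_, fun he => ht.ne (by rw [← Fin.ext he, Equiv.apply_symm_apply])⟩
    by_contra! ht'
    have := h s ⟨s + 1, by omega⟩ (ρ.symm t) (by simp [Fin.lt_def]) (by simp [Fin.lt_def]; omega)
    rw [Equiv.apply_symm_apply] at this
    exact ht.not_gt this
  · exact ρ.symm.injective (Fin.val_injective htt')

def MovesAtMostOne (ρ : Equiv.Perm (Fin n)) : Prop :=
  ∀ s, (ρ s : ℕ) ≤ s + 1 ∧ (s : ℕ) ≤ ρ s + 1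

lemma MovesAtMostOne.symm {ρ : Equiv.Perm (Fin n)} (h : MovesAtMostOne ρ) :
    MovesAtMostOne ρ.symm := fun s => by
  simpa [and_comm] using h (ρ.symm s)

lemma avoidsAll_iff_movesAtMostOne (ρ : Equiv.Perm (Fin n)) :
    AvoidsAll ρ [p231, p312, p321] ↔ MovesAtMostOne ρ := by
  rw [avoidsAll_iff_forall_lt]
  refine ⟨fun h s => ⟨apply_le_succ_of_forall_lt h s, ?_⟩, fun h a b c hab hbc => ?_⟩
  · simpa using apply_le_succ_of_forall_lt (forall_lt_symm h) (ρ s)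
  · have hac : (ρ a : ℕ) ≠ ρ c := Fin.val_injective.ne (ρ.injective.ne (hab.trans hbc).ne)
    have := (h a).1
    have := (h c).2
    rw [Fin.lt_def] at *
    omega

lemma MovesAtMostOne.apply_eq_succ_of_apply_succ_eq {ρ : Equiv.Perm (Fin n)} (h : MovesAtMostOne ρ)
    (k j : Fin n) (hj : (j : ℕ) = k + 1) (hρ : ρ j = k) : ρ k = j := by
  induction k using WellFoundedLT.induction generalizing j with
  | _ k ih =>
  have hk : ρ k ≠ k := fun e => by
    have := ρ.injective (e.trans hρ.symm)
    omega
  rcases (by have := h k; omega : (ρ k : ℕ) = k + 1 ∨ (ρ k : ℕ) + 1 = k) with hk' | hk'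
  · exact Fin.ext (by omega)
  · exact ρ.injective ((ih (ρ k) (Fin.lt_def.mpr (by omega)) k hk'.symm rfl).trans hρ.symm)

lemma MovesAtMostOne.involutive {ρ : Equiv.Perm (Fin n)} (h : MovesAtMostOne ρ) :
    Function.Involutive ρ := by
  intro s
  rcases (by have := h s; omega : (ρ s : ℕ) = s + 1 ∨ (ρ s : ℕ) = s ∨ (ρ s : ℕ) + 1 = s)
    with hs | hs | hs
  · have := h.symm.apply_eq_succ_of_apply_succ_eq s (ρ s) hs (by simp)
    exact ((Equiv.symm_apply_eq ρ).mp this).symm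
  · rw [Fin.ext hs, Fin.ext hs]
  · exact h.apply_eq_succ_of_apply_succ_eq (ρ s) s hs.symm rfl

end Patterns

section Characterization

def SwapCondition {m : ℕ} (g : Fin m → ℕ) : Prop :=
  ∀ i : Fin m, g i ≤ i ∨ (g i = i + 1 ∧ ∀ j : Fin m, (j : ℕ) = i + 1 → g j ≤ i)

instance {m : ℕ} : DecidablePred (SwapCondition (m := m)) := fun _ => by
  unfold SwapCondition; infer_instance

lemma SwapCondition.le_succ {m : ℕ} {g : Fin m → ℕ} (hg : SwapCondition g) (i : Fin m) :
    g i ≤ i + 1 := by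
  rcases hg i with h | ⟨h, -⟩ <;> omega

lemma SwapCondition.lt_of_apply_eq_succ {m : ℕ} {g : Fin m → ℕ} (hg : SwapCondition g) {i : Fin m}
    (hi : g i = i + 1) (j : Fin m) (hj : j < i) : g j < i := by
  rw [Fin.lt_def] at hj
  rcases hg j with h | ⟨h, h'⟩
  · omega
  · by_contra hji
    have := h' i (by omega)
    omega

variable {n : ℕ}

lemma swapCondition_of_isParkingPerm {f : Fin n → Fin n} {ρ : Equiv.Perm (Fin n)}
    (hρ : IsParkingPerm f ρ) (hm : MovesAtMostOne ρ) : SwapCondition (Fin.val ∘ f) := by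
  have hsymm : ∀ c, ρ.symm c = ρ c := fun c => ρ.symm_apply_eq.mpr (hm.involutive c).symm
  have hpark := (isParkingPerm_iff f ρ).mp hρ
  simp only [hsymm] at hpark
  intro k
  simp only [Function.comp_apply]
  rcases (by have := hm k; omega : (ρ k : ℕ) ≤ k ∨ (ρ k : ℕ) = k + 1) with hle | heq
  · exact Or.inl ((Fin.le_def.mp (hpark k).1.1).trans hle)
  · refine Or.inr ⟨?_, fun j hj => ?_⟩
    · have hfk := Fin.le_def.mp (hpark k).1.1
      by_contra hne
      have := (hpark k).2 (show k ∈ {t | f k ≤ t ∧ k ≤ ρ t} from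
        ⟨Fin.le_def.mpr (by omega), Fin.le_def.mpr (by omega)⟩)
      rw [Fin.le_def] at this
      omega
    · obtain rfl : j = ρ k := Fin.ext (by omega)
      have := Fin.le_def.mp (hpark (ρ k)).1.1
      rwa [hm.involutive k] at this

-- For `i = 0` the second test repeats the first, so the truncated `i - 1` does no harm.
def swapPartner (f : Fin n → Fin n) (i : Fin n) : Fin n :=
  if (f i : ℕ) = i + 1 then f i
  else if (f ⟨i - 1, (Nat.sub_le _ _).trans_lt i.isLt⟩ : ℕ) = i - 1 + 1
    then ⟨i - 1, (Nat.sub_le _ _).trans_lt i.isLt⟩ else i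

lemma swapPartner_of_apply_eq_succ {f : Fin n → Fin n} {i : Fin n} (h : (f i : ℕ) = i + 1) :
    swapPartner f i = f i :=
  if_pos h

lemma swapPartner_cases (f : Fin n → Fin n) (i : Fin n) :
    ((f i : ℕ) = i + 1 ∧ swapPartner f i = f i) ∨
      (∃ q : Fin n, (q : ℕ) + 1 = i ∧ (f q : ℕ) = i ∧ swapPartner f i = q) ∨
      ((f i : ℕ) ≠ i + 1 ∧ (∀ q : Fin n, (q : ℕ) + 1 = i → (f q : ℕ) ≠ i) ∧
        swapPartner f i = i) := by
  by_cases h₁ : (f i : ℕ) = i + 1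
  · exact Or.inl ⟨h₁, if_pos h₁⟩
  by_cases h₂ : (f ⟨i - 1, (Nat.sub_le _ _).trans_lt i.isLt⟩ : ℕ) = i - 1 + 1
  · have hi : (i : ℕ) ≠ 0 := fun h0 => h₁ (by
      rw [show i = ⟨i - 1, (Nat.sub_le _ _).trans_lt i.isLt⟩ from Fin.ext (by simp [h0])]
      simpa [h0] using h₂)
    refine Or.inr (Or.inl ⟨⟨i - 1, (Nat.sub_le _ _).trans_lt i.isLt⟩,
      show i - 1 + 1 = (i : ℕ) by omega, h₂.trans (by omega), ?_⟩)
    rw [swapPartner, if_neg h₁, if_pos h₂]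
  · refine Or.inr (Or.inr ⟨h₁, fun q hq hfq => h₂ ?_, by rw [swapPartner, if_neg h₁, if_neg h₂]⟩)
    rw [show (⟨i - 1, (Nat.sub_le _ _).trans_lt i.isLt⟩ : Fin n) = q from Fin.ext (by simp; omega)]
    omega

lemma SwapCondition.swapPartner_of_pred {f : Fin n → Fin n} (hf : SwapCondition (Fin.val ∘ f))
    {q i : Fin n} (hqi : (q : ℕ) + 1 = i) (hq : (f q : ℕ) = i) : swapPartner f i = q := by
  rcases swapPartner_cases f i with ⟨h, -⟩ | ⟨q', hq', -, h⟩ | ⟨-, h, -⟩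
  · rcases hf q with h' | ⟨-, h'⟩
    · simp only [Function.comp_apply] at h'
      omega
    · have := h' i (by omega)
      simp only [Function.comp_apply] at this
      omega
  · rw [h]
    exact Fin.ext (by omega)
  · exact absurd hq (h q hqi)

lemma SwapCondition.swapPartner_involutive {f : Fin n → Fin n}
    (hf : SwapCondition (Fin.val ∘ f)) : Function.Involutive (swapPartner f) := by
  intro i
  rcases swapPartner_cases f i with ⟨h, h'⟩ | ⟨q, hq, hfq, h'⟩ | ⟨-, -, h'⟩
  · rw [h', hf.swapPartner_of_pred h.symm rfl]
  · rw [h', swapPartner_of_apply_eq_succ (hfq.trans hq.symm)]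
    exact Fin.ext hfq
  · rw [h', h']

lemma SwapCondition.apply_le_swapPartner {f : Fin n → Fin n}
    (hf : SwapCondition (Fin.val ∘ f)) (i : Fin n) : f i ≤ swapPartner f i := by
  rw [Fin.le_def]
  rcases swapPartner_cases f i with ⟨-, h'⟩ | ⟨q, hq, hfq, h'⟩ | ⟨h, -, h'⟩ <;> rw [h']
  · rcases hf q with h | ⟨-, h⟩
    · simp only [Function.comp_apply] at h
      omega
    · simpa [← hq] using h i hq.symm
  · exact (hf i).resolve_right fun h' => h h'.1

lemma SwapCondition.exists_isParkingPerm {f : Fin n → Fin n} (hf : SwapCondition (Fin.val ∘ f)) :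
    ∃ ρ : Equiv.Perm (Fin n), IsParkingPerm f ρ ∧ MovesAtMostOne ρ := by
  let ρ := Function.Involutive.toPerm (swapPartner f) hf.swapPartner_involutive
  have hρ : ∀ i, ρ i = swapPartner f i := fun _ => rfl
  have hm : MovesAtMostOne ρ := fun i => by
    rw [hρ]
    rcases swapPartner_cases f i with ⟨h, h'⟩ | ⟨q, hq, -, h'⟩ | ⟨-, -, h'⟩ <;> rw [h'] <;> omega
  refine ⟨ρ, (isParkingPerm_iff f ρ).mpr fun c => ?_, hm⟩
  rw [Function.Involutive.toPerm_symm]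
  refine ⟨⟨hf.apply_le_swapPartner c, (hf.swapPartner_involutive c).ge⟩, fun t ht => ?_⟩
  obtain ⟨ht₁, ht₂⟩ := ht
  have hinj : (ρ t : ℕ) = ρ c → t = c := fun h => ρ.injective (Fin.ext h)
  have := (hm t).1
  rw [Fin.le_def] at ht₁ ht₂ ⊢
  simp only [hρ, Function.Involutive.coe_toPerm] at hinj this ht₂ ⊢
  rcases swapPartner_cases f c with ⟨-, h'⟩ | ⟨q, hq, -, h'⟩ | ⟨-, -, h'⟩ <;> rw [h'] at hinj ⊢
  · exact ht₁
  · omega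
  · by_contra! htc
    have := hinj (by omega)
    omega

theorem parking_avoiding_iff (f : Fin n → Fin n) :
    (IsParkingFunction f ∧ ∃ ρ : Equiv.Perm (Fin n),
      IsParkingPerm f ρ ∧ AvoidsAll ρ [p231, p312, p321]) ↔ SwapCondition (Fin.val ∘ f) := by
  simp only [avoidsAll_iff_movesAtMostOne]
  constructor
  · rintro ⟨-, ρ, hρ, hm⟩
    exact swapCondition_of_isParkingPerm hρ hm
  · intro hf
    obtain ⟨ρ, hρ, hm⟩ := hf.exists_isParkingPerm
    exact ⟨hρ.isParkingFunction, ρ, hρ, hm⟩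

end Characterization

lemma swapCondition_snoc {m : ℕ} (g : Fin m → ℕ) (x : ℕ) :
    SwapCondition (Fin.snoc g x : Fin (m + 1) → ℕ) ↔
      SwapCondition g ∧ x ≤ m + 1 ∧ ∀ i : Fin m, g i = i + 1 → (i : ℕ) + 1 = m → x < m := by
  simp only [SwapCondition, Fin.forall_fin_succ', Fin.snoc_castSucc, Fin.snoc_last,
    Fin.val_castSucc, Fin.val_last]
  constructor
  · rintro ⟨hinit, hx⟩
    refine ⟨fun i => (hinit i).imp_right fun h => ⟨h.1, h.2.1⟩, ?_, fun i hi hm => ?_⟩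
    · rcases hx with hx | ⟨hx, -⟩ <;> omega
    · rcases hinit i with h | ⟨-, -, h⟩
      · omega
      · have := h hm.symm
        omega
  · rintro ⟨hg, hx, hlast⟩
    refine ⟨fun i => (hg i).imp_right fun h => ⟨h.1, h.2, fun hm => ?_⟩, ?_⟩
    · have := hlast i h.1 hm.symm
      omega
    · rcases hx.lt_or_eq with hx | hx
      · exact Or.inl (by omega)
      · exact Or.inr ⟨hx, fun i hi => by omega, by omega⟩

def swapCount (m : ℕ) : ℕ := (univ.filter fun f : Fin m → Fin m => SwapCondition (Fin.val ∘ f)).card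

lemma val_comp_snoc_castSucc {m k : ℕ} (g : Fin m → Fin k) (v : Fin (k + 1)) :
    Fin.val ∘ (Fin.snoc (Fin.castSucc ∘ g) v : Fin (m + 1) → Fin (k + 1)) =
      Fin.snoc (Fin.val ∘ g) (v : ℕ) := by
  rw [Fin.comp_snoc]; rfl

lemma exists_castSucc_comp_eq {m k : ℕ} (f : Fin m → Fin (k + 1)) (hf : ∀ i, (f i : ℕ) < k) :
    ∃ g : Fin m → Fin k, Fin.castSucc ∘ g = f :=
  ⟨fun i => (f i).castPred (by rw [Ne, Fin.ext_iff, Fin.val_last]; exact (hf i).ne),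
    funext fun i => Fin.castSucc_castPred _ _⟩

lemma card_swapCondition_of_le (n : ℕ) :
    (univ.filter fun f : Fin (n + 2) → Fin (n + 2) =>
      SwapCondition (Fin.val ∘ f) ∧ (f (Fin.last n).castSucc : ℕ) ≤ n).card =
      (n + 2) * swapCount (n + 1) := by
  conv_rhs => rw [swapCount, ← Finset.card_fin (n + 2), ← card_product]
  symm
  refine card_nbij (fun p => (Fin.snoc (Fin.castSucc ∘ p.2) p.1 : Fin (n + 2) → Fin (n + 2)))
    ?_ ?_ ?_
  · rintro ⟨v, g⟩ hg
    simp only [mem_coe, mem_product, mem_filter, mem_univ, true_and] at hg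
    simp only [mem_coe, mem_filter, mem_univ, true_and, val_comp_snoc_castSucc,
      swapCondition_snoc, Fin.snoc_castSucc, Function.comp_apply, Fin.val_castSucc]
    refine ⟨⟨hg, by omega, fun i hi _ => absurd hi (by omega)⟩, by omega⟩
  · rintro ⟨v, g⟩ - ⟨v', g'⟩ - h
    obtain ⟨h1, h2⟩ := Fin.snoc_injective2 h
    exact Prod.ext h2 (funext fun i => Fin.castSucc_injective _ (congrFun h1 i))
  · intro f hf
    simp only [mem_coe, mem_filter, mem_univ, true_and] at hf
    obtain ⟨g, hg⟩ := exists_castSucc_comp_eq (Fin.init f) fun i => by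
      refine Fin.lastCases (Nat.lt_succ_of_le hf.2) (fun j => ?_) i
      have := hf.1.le_succ (Fin.castSucc (Fin.castSucc j))
      simp only [Function.comp_apply, Fin.val_castSucc] at this
      simp only [Fin.init]
      omega
    have hf' : (Fin.snoc (Fin.castSucc ∘ g) (f (Fin.last _)) : Fin (n + 2) → Fin (n + 2)) = f := by
      rw [hg, Fin.snoc_init_self]
    refine ⟨(f (Fin.last _), g), ?_, hf'⟩
    have := hf.1
    rw [← hf', val_comp_snoc_castSucc, swapCondition_snoc] at this
    simpa using this.1

lemma SwapCondition.of_lt_apply_castSucc_last {m : ℕ} {g : Fin (m + 2) → ℕ}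
    (hg : SwapCondition g) (hgt : ¬ g (Fin.last m).castSucc ≤ m) :
    g (Fin.last m).castSucc = m + 1 ∧ g (Fin.last (m + 1)) < m + 1 ∧
      ∀ j : Fin m, g j.castSucc.castSucc < m := by
  have hm : g (Fin.last m).castSucc = m + 1 := by
    have := hg.le_succ (Fin.last m).castSucc
    simp only [Fin.val_castSucc, Fin.val_last] at this
    omega
  refine ⟨hm, ?_, fun j => ?_⟩
  · have := ((hg (Fin.last m).castSucc).resolve_left (by simp [hm])).2 (Fin.last (m + 1)) (by simp)
    simp only [Fin.val_castSucc, Fin.val_last] at this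
    omega
  · simpa using hg.lt_of_apply_eq_succ (i := (Fin.last m).castSucc) (by simpa using hm)
      j.castSucc.castSucc (Fin.lt_def.mpr (by simp))

lemma card_swapCondition_of_lt (n : ℕ) :
    (univ.filter fun f : Fin (n + 2) → Fin (n + 2) =>
      SwapCondition (Fin.val ∘ f) ∧ ¬ (f (Fin.last n).castSucc : ℕ) ≤ n).card =
      (n + 1) * swapCount n := by
  conv_rhs => rw [swapCount, ← Finset.card_fin (n + 1), ← card_product]
  symm
  let extend : Fin (n + 1) × (Fin n → Fin n) → Fin (n + 2) → Fin (n + 2) := fun p =>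
    Fin.snoc (Fin.snoc (Fin.castSucc ∘ Fin.castSucc ∘ p.2) (Fin.last (n + 1))) p.1.castSucc
  have hval : ∀ p, Fin.val ∘ extend p = Fin.snoc (Fin.snoc (Fin.val ∘ p.2) (n + 1)) (p.1 : ℕ) :=
    fun p => by simp only [extend, Fin.comp_snoc]; rfl
  refine card_nbij extend ?_ ?_ ?_
  · rintro ⟨v, g⟩ hg
    simp only [mem_coe, mem_product, mem_filter, mem_univ, true_and] at hg
    simp only [mem_coe, mem_filter, mem_univ, true_and, hval, swapCondition_snoc,
      Function.comp_apply]
    refine ⟨⟨⟨hg, le_rfl, fun i hi hin => by have := (g i).isLt; omega⟩, by omega,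
      fun _ _ _ => v.isLt⟩, ?_⟩
    simp [extend]
  · rintro ⟨v, g⟩ - ⟨v', g'⟩ - h
    obtain ⟨h1, h2⟩ := Fin.snoc_injective2 h
    obtain ⟨h1, -⟩ := Fin.snoc_injective2 h1
    exact Prod.ext (Fin.castSucc_injective _ h2)
      (funext fun i => Fin.castSucc_injective _ (Fin.castSucc_injective _ (congrFun h1 i)))
  · intro f hf
    simp only [mem_coe, mem_filter, mem_univ, true_and] at hf
    obtain ⟨hf, hgt⟩ := hf
    obtain ⟨hn, hlast, hinit⟩ := hf.of_lt_apply_castSucc_last hgt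
    simp only [Function.comp_apply] at hn hlast hinit
    obtain ⟨g₁, hg₁⟩ := exists_castSucc_comp_eq (Fin.init (Fin.init f)) fun j =>
      (hinit j).trans (Nat.lt_succ_self n)
    obtain ⟨g, hg⟩ := exists_castSucc_comp_eq g₁ fun j => by
      have := congrArg Fin.val (congrFun hg₁ j)
      simp only [Function.comp_apply, Fin.val_castSucc, Fin.init] at this
      exact this ▸ hinit j
    let v : Fin (n + 1) := (f (Fin.last (n + 1))).castPred
      (by rw [Ne, Fin.ext_iff, Fin.val_last]; exact hlast.ne)
    have hext : extend (v, g) = f := by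
      have hmid : Fin.last (n + 1) = Fin.init f (Fin.last n) := Fin.ext (by simp [Fin.init, hn])
      simp only [extend, hg, hg₁, v, Fin.castSucc_castPred]
      nth_rw 1 [hmid]
      rw [Fin.snoc_init_self, Fin.snoc_init_self]
    refine ⟨(v, g), ?_, hext⟩
    have := hf
    rw [← hext, hval, swapCondition_snoc, swapCondition_snoc] at this
    simpa using this.1.1

lemma swapCount_add_two (n : ℕ) :
    swapCount (n + 2) = (n + 2) * swapCount (n + 1) + (n + 1) * swapCount n := by
  rw [← card_swapCondition_of_le, ← card_swapCondition_of_lt, ← filter_filter, ← filter_filter,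
    card_filter_add_card_filter_not, swapCount]

lemma swapCount_eq (n : ℕ) : swapCount n = numDerangements n + numDerangements (n + 1) := by
  induction n using Nat.twoStepInduction with
  | zero => decide
  | one => decide
  | more n ih₀ ih₁ =>
    rw [swapCount_add_two, ih₀, ih₁, numDerangements_add_two (n + 1), numDerangements_add_two n]
    ring

lemma numDerangements_eq_sum (n : ℕ) :
    (numDerangements n : ℚ) = ∑ k ∈ range (n + 1), (-1 : ℚ) ^ k * (n.factorial / k.factorial) := by
  have h := congrArg (Int.cast : ℤ → ℚ) (numDerangements_sum n)
  push_cast at h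
  rw [h]
  refine sum_congr rfl fun k hk => ?_
  have hkn : k + (n - k) = n := by rw [mem_range] at hk; omega
  congr 1
  rw [eq_div_iff (by positivity), ← Nat.cast_mul, mul_comm _ k.factorial,
    Nat.factorial_mul_ascFactorial, hkn]

lemma sum_eq_numDerangements_add (n : ℕ) :
    ∑ k ∈ range (n + 1), (-1 : ℚ) ^ k * (n.factorial / k.factorial) * ((n : ℚ) - k + 1) =
      numDerangements n + numDerangements (n + 1) := by
  set a : ℕ → ℚ := fun k => (-1 : ℚ) ^ k * (n.factorial / k.factorial) with ha
  have hd : (numDerangements n : ℚ) = ∑ k ∈ range n, a k + (-1) ^ n := by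
    rw [numDerangements_eq_sum, sum_range_succ, div_self (by positivity), mul_one]
  have hsucc : ∑ k ∈ range (n + 1), a k * (n + 1) = numDerangements (n + 1) + (-1) ^ n := by
    rw [numDerangements_eq_sum, sum_range_succ _ (n + 1), div_self (by positivity), mul_one,
      pow_succ, mul_neg_one, neg_add_cancel_right]
    refine sum_congr rfl fun k _ => ?_
    rw [ha, Nat.factorial_succ]
    push_cast
    ring
  have hshift : ∑ k ∈ range (n + 1), a k * k = (-1) ^ n - numDerangements n := by
    rw [hd, sum_range_succ']
    have : ∀ j ∈ range n, a (j + 1) * ((j + 1 : ℕ) : ℚ) = - a j := fun j _ => by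
      simp only [ha, Nat.factorial_succ, Nat.cast_mul, pow_succ]
      field_simp
    rw [sum_congr rfl this, sum_neg_distrib]
    simp
  calc _ = ∑ k ∈ range (n + 1), (a k * (n + 1) - a k * k) := sum_congr rfl fun k _ => by ring
    _ = _ := by rw [sum_sub_distrib, hsucc, hshift]; ring

lemma pk_eq_swapCount (n : ℕ) : pk n [p231, p312, p321] = swapCount n := by
  rw [pk, Nat.card_congr (Equiv.subtypeEquivRight parking_avoiding_iff), Nat.card_eq_fintype_card,
    Fintype.card_subtype, swapCount]

theorem stmt14_general (n : ℕ) :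
    (pk n [p231, p312, p321] : ℚ) =
      ∑ k ∈ Finset.range (n + 1),
        (-1 : ℚ) ^ k * ((n.factorial : ℚ) / k.factorial) * ((n : ℚ) - k + 1) := by
  rw [pk_eq_swapCount, swapCount_eq, sum_eq_numDerangements_add, Nat.cast_add]

theorem stmt14 (n : ℕ) (hn : 1 ≤ n) :
    (pk n [p231, p312, p321] : ℚ) =
      ∑ k ∈ Finset.range (n + 1),
        (-1 : ℚ) ^ k * ((n.factorial : ℚ) / k.factorial) * ((n : ℚ) - k + 1) :=
  stmt14_general n
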